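/- For every integer n ≥ 0, every real x > 0, and all reals ε, ε_s with 0 < ε ≤ ε_s, the quadratic f_n satisfies f_n(−1) > 0. -/

import Mathlib

open Real Finset

/-- Modified spherical Bessel function of the second kind `k_n`, explicit closed form. -/
noncomputable def kBes (n : ℕ) (x : ℝ) : ℝ :=
  (Real.exp (-x) / x) *
    ∑ l ∈ Finset.range (n + 1),
      (Nat.factorial (n + l) : ℝ) /
        ((Nat.factorial l : ℝ) * (Nat.factorial (n - l) : ℝ) * (2 * x) ^ l)

/-- Modified spherical Bessel function of the first kind `i_n`, explicit closed form. -/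
noncomputable def iBes (n : ℕ) (x : ℝ) : ℝ :=
  (1 / (2 * x)) *
    (Real.exp x *
        ∑ l ∈ Finset.range (n + 1),
          (-1 : ℝ) ^ l * (Nat.factorial (n + l) : ℝ) /
            ((Nat.factorial l : ℝ) * (Nat.factorial (n - l) : ℝ) * (2 * x) ^ l)
      + (-1 : ℝ) ^ (n + 1) * Real.exp (-x) *
        ∑ l ∈ Finset.range (n + 1),
          (Nat.factorial (n + l) : ℝ) /
            ((Nat.factorial l : ℝ) * (Nat.factorial (n - l) : ℝ) * (2 * x) ^ l))

/-- The quadratic `f_n(λ)` from the spectral-radius proof. -/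
noncomputable def fquad (n : ℕ) (x eps epss lam : ℝ) : ℝ :=
  let A : ℝ := (n : ℝ) * (eps - epss) * iBes n x - x * epss * iBes (n + 1) x
  let B : ℝ := (n : ℝ) * (eps - epss) * kBes n x + x * epss * kBes (n + 1) x
  let C : ℝ := (n : ℝ) * iBes n x + x * iBes (n + 1) x
  let D : ℝ := (n : ℝ) * kBes n x - x * kBes (n + 1) x
  let F : ℝ := 2 * (n : ℝ) / x + iBes (n + 1) x / iBes n x - kBes (n + 1) x / kBes n x
  A ^ 2 * D * kBes n x * lam ^ 2 - A * B * x * iBes n x * kBes n x * F * lam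
    + B ^ 2 * C * iBes n x

/-!
At `λ = -1` the quadratic factors as `(A kₙ + B iₙ) (A Dₙ + B Cₙ)`. With
`W := x (iₙ kₙ₊₁ - iₙ₊₁ kₙ) - 2n iₙ kₙ`, the first factor is `ε_s W + 2n ε iₙ kₙ` and the second
is `n (2ε_s - ε) W + 2n² ε_s iₙ kₙ + 2x² ε_s iₙ₊₁ kₙ₊₁`, so for `0 < ε ≤ ε_s` everything reduces
to `W > 0`, i.e. to `iₙ kₙ` being strictly decreasing.

For `n = 0` this is an explicit inequality between exponentials. For `n ≥ 1` it follows, after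
eliminating `iₙ₋₁` and `kₙ₋₁` with the three-term recurrences, from the Turán-type inequalities
`iₙ₋₁ iₙ₊₁ < iₙ²` and `kₙ² < kₙ₋₁ kₙ₊₁`. Both `iₙ` and `(-1)ⁿ kₙ` satisfy
`fₙ' = fₙ₊₁ + (n/x) fₙ` and `fₙ₊₂ = fₙ - (2n+3)/x fₙ₊₁` (as `kₙ(x) = e^{-x} yₙ(1/x) / x` for the
Bessel polynomials `yₙ`), and for every such sequence `y³ (fₙ₊₁² - fₙ fₙ₊₂)` has derivative
`2y² fₙ₊₁² > 0`. It therefore increases, and the Turán inequalities follow from its limit `0`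
at `0⁺` for `i` and at `∞` for `k`.
-/

open Polynomial Filter Topology
open scoped Nat

lemma neg_one_pow_sq (n : ℕ) : ((-1 : ℝ) ^ n) ^ 2 = 1 := by
  rw [← pow_mul, pow_mul']
  norm_num

lemma StrictMonoOn.pos_of_le_of_tendsto_nhdsGT {g u : ℝ → ℝ} (hg : StrictMonoOn g (Set.Ioi 0))
    (hu : Tendsto u (𝓝[>] 0) (𝓝 0)) (hug : ∀ y, 0 < y → u y ≤ g y) {x : ℝ} (hx : 0 < x) :
    0 < g x := by
  have hx2 : 0 < x / 2 := half_pos hx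
  have h : 0 ≤ g (x / 2) := by
    refine le_of_tendsto hu ?_
    filter_upwards [Ioo_mem_nhdsGT hx2] with y hy
    exact (hug y hy.1).trans (hg hy.1 hx2 hy.2).le
  exact h.trans_lt (hg hx2 hx (half_lt_self hx))

lemma StrictMonoOn.neg_of_le_of_tendsto_atTop {g u : ℝ → ℝ} (hg : StrictMonoOn g (Set.Ioi 0))
    (hu : Tendsto u atTop (𝓝 0)) (hgu : ∀ y, 0 < y → g y ≤ u y) {x : ℝ} (hx : 0 < x) :
    g x < 0 := by
  have hx1 : 0 < x + 1 := by linarith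
  have h : g (x + 1) ≤ 0 := by
    refine ge_of_tendsto hu ?_
    filter_upwards [eventually_gt_atTop (x + 1)] with y hy
    exact (hg hx1 (hx1.trans hy) hy).le.trans (hgu y (hx1.trans hy))
  exact (hg hx hx1 (by linarith)).trans_le h

-- `descFactorial` makes the coefficient vanish for `j > n`, so no boundary cases arise.
noncomputable def besselCoeff (n j : ℕ) : ℝ :=
  ((n + j).descFactorial (2 * j) : ℝ) / ((j ! : ℝ) * 2 ^ j)

noncomputable def besselPoly (n : ℕ) : ℝ[X] :=
  ∑ j ∈ range (n + 1), C (besselCoeff n j) * X ^ j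

lemma besselCoeff_of_lt {n j : ℕ} (h : n < j) : besselCoeff n j = 0 := by
  simp [besselCoeff, Nat.descFactorial_eq_zero_iff_lt.mpr (by omega : n + j < 2 * j)]

lemma besselCoeff_of_le {n j : ℕ} (h : j ≤ n) :
    besselCoeff n j = ((n + j)! : ℝ) / ((j ! : ℝ) * (n - j)! * 2 ^ j) := by
  have key := Nat.factorial_mul_descFactorial (show 2 * j ≤ n + j by omega)
  rw [show n + j - 2 * j = n - j by omega] at key
  rw [besselCoeff, ← key]
  push_cast
  have := Nat.factorial_ne_zero (n - j)
  field_simp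

lemma besselCoeff_zero_right (n : ℕ) : besselCoeff n 0 = 1 := by
  simp [besselCoeff]

lemma besselCoeff_succ_succ (n j : ℕ) :
    besselCoeff (n + 1) (j + 1) = besselCoeff n (j + 1) + (n + j + 1) * besselCoeff n j := by
  rcases lt_or_ge n j with h | h
  · rw [besselCoeff_of_lt h, besselCoeff_of_lt (by omega : n < j + 1),
      besselCoeff_of_lt (by omega : n + 1 < j + 1)]
    simp
  · simp only [besselCoeff]
    rw [show n + 1 + (j + 1) = n + j + 1 + 1 by ring, show 2 * (j + 1) = 2 * j + 1 + 1 by ring,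
      show n + (j + 1) = n + j + 1 by ring]
    simp only [Nat.succ_descFactorial_succ, Nat.descFactorial_succ]
    rw [show n + j - 2 * j = n - j by omega]
    push_cast [Nat.cast_sub h, Nat.factorial_succ]
    field_simp
    ring

lemma coeff_besselPoly (n j : ℕ) : (besselPoly n).coeff j = besselCoeff n j := by
  simp only [besselPoly, finsetSum_coeff, coeff_C_mul_X_pow, Finset.sum_ite_eq, mem_range]
  split_ifs with h
  · rfl
  · exact (besselCoeff_of_lt (by omega)).symm

lemma eval_besselPoly (n : ℕ) (t : ℝ) :
    (besselPoly n).eval t =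
      ∑ l ∈ range (n + 1), ((n + l)! : ℝ) / ((l ! : ℝ) * (n - l)! * 2 ^ l) * t ^ l := by
  simp only [besselPoly, eval_finsetSum, eval_mul, eval_C, eval_pow, eval_X]
  refine sum_congr rfl fun l hl => ?_
  rw [besselCoeff_of_le (by simpa [Nat.lt_succ_iff] using hl)]

lemma besselPoly_zero : besselPoly 0 = 1 := by
  simp [besselPoly, besselCoeff_zero_right]

lemma besselPoly_succ (n : ℕ) :
    besselPoly (n + 1) =
      (1 + (n + 1 : ℝ[X]) * X) * besselPoly n + X ^ 2 * derivative (besselPoly n) := by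
  have hX : (1 + (n + 1 : ℝ[X]) * X) * besselPoly n + X ^ 2 * derivative (besselPoly n) =
      besselPoly n + X * (C ((n : ℝ) + 1) * besselPoly n + X * derivative (besselPoly n)) := by
    simp only [map_add, map_natCast, map_one]
    ring
  ext (_ | j)
  · simp [hX, coeff_besselPoly, besselCoeff_zero_right]
  · rw [hX, coeff_add, coeff_X_mul, coeff_add, coeff_C_mul]
    rcases j with _ | j
    · simp [coeff_besselPoly, besselCoeff_succ_succ]
    · rw [coeff_X_mul, coeff_derivative]
      simp only [coeff_besselPoly, besselCoeff_succ_succ]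
      push_cast
      ring

lemma besselPoly_one : besselPoly 1 = 1 + X := by
  simpa [besselPoly_zero] using besselPoly_succ 0

/-- The defect `Rₙ := yₙ₊₂ - (2n+3) X yₙ₊₁ - yₙ` satisfies `Rₙ₊₁ = (1 + (n+1) X) Rₙ + X² Rₙ'`,
so the three-term recurrence follows from `besselPoly_succ` and `R₀ = 0`. -/
lemma besselPoly_add_two (n : ℕ) :
    besselPoly (n + 2) = (2 * n + 3 : ℝ[X]) * X * besselPoly (n + 1) + besselPoly n := by
  induction n with
  | zero =>
    rw [besselPoly_succ 1, besselPoly_one, besselPoly_zero]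
    simp only [derivative_add, derivative_one, derivative_X]
    push_cast
    ring
  | succ n ih =>
    have dih := congrArg derivative ih
    simp only [derivative_add, derivative_mul, derivative_X, derivative_natCast,
      derivative_ofNat] at dih
    have e1 := besselPoly_succ (n + 2)
    have e2 := besselPoly_succ (n + 1)
    have e3 := besselPoly_succ n
    push_cast at e1 e2 e3 ⊢
    linear_combination e1 - (2 * n + 3 : ℝ[X]) * X * e2 - e3 + (1 + (n + 1 : ℝ[X]) * X) * ih +
      X ^ 2 * dih

structure IsSphBesselSeq (f : ℕ → ℝ → ℝ) : Prop where
  hasDerivAt : ∀ n {x : ℝ}, x ≠ 0 → HasDerivAt (f n) (f (n + 1) x + n / x * f n x) x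
  add_two : ∀ n {x : ℝ}, x ≠ 0 → f (n + 2) x = f n x - (2 * n + 3) / x * f (n + 1) x

namespace IsSphBesselSeq

variable {f g : ℕ → ℝ → ℝ}

lemma linearComb (hf : IsSphBesselSeq f) (hg : IsSphBesselSeq g) (a b : ℝ) :
    IsSphBesselSeq (fun n x => a * f n x + b * g n x) where
  hasDerivAt n x hx := (((hf.hasDerivAt n hx).const_mul a).add
    ((hg.hasDerivAt n hx).const_mul b)).congr_deriv (by ring)
  add_two n x hx := by rw [hf.add_two n hx, hg.add_two n hx]; ring

lemma hasDerivAt_pow_mul (hf : IsSphBesselSeq f) (n : ℕ) {x : ℝ} (hx : x ≠ 0) :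
    HasDerivAt (fun y => y ^ (n + 2) * f (n + 1) y) (x ^ (n + 2) * f n x) x := by
  refine ((hasDerivAt_pow (n + 2) x).mul (hf.hasDerivAt (n + 1) hx)).congr_deriv ?_
  rw [hf.add_two n hx]
  push_cast
  field_simp
  ring

lemma hasDerivAt_turan (hf : IsSphBesselSeq f) (n : ℕ) {x : ℝ} (hx : x ≠ 0) :
    HasDerivAt (fun y => y ^ 3 * (f (n + 1) y ^ 2 - f n y * f (n + 2) y))
      (2 * x ^ 2 * f (n + 1) x ^ 2) x := by
  refine ((hasDerivAt_pow 3 x).mul (((hf.hasDerivAt (n + 1) hx).pow 2).sub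
    ((hf.hasDerivAt n hx).mul (hf.hasDerivAt (n + 2) hx)))).congr_deriv ?_
  have r0 := hf.add_two n hx
  have r1 := hf.add_two (n + 1) hx
  push_cast at r1 ⊢
  simp only [Pi.sub_apply, Pi.mul_apply, Pi.pow_apply]
  rw [show n + 2 + 1 = n + 1 + 2 by ring, r1, r0]
  field_simp
  ring

lemma strictMonoOn_turan (hf : IsSphBesselSeq f) (n : ℕ)
    (hne : ∀ y, 0 < y → f (n + 1) y ≠ 0) :
    StrictMonoOn (fun y => y ^ 3 * (f (n + 1) y ^ 2 - f n y * f (n + 2) y)) (Set.Ioi 0) := by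
  have hd : ∀ y ∈ Set.Ioi (0 : ℝ),
      HasDerivAt (fun y => y ^ 3 * (f (n + 1) y ^ 2 - f n y * f (n + 2) y))
        (2 * y ^ 2 * f (n + 1) y ^ 2) y :=
    fun y hy => hf.hasDerivAt_turan n (ne_of_gt hy)
  refine strictMonoOn_of_deriv_pos (convex_Ioi 0)
    (fun y hy => (hd y hy).continuousAt.continuousWithinAt) fun y hy => ?_
  rw [interior_Ioi] at hy
  rw [(hd y hy).deriv]
  have := hne y hy
  have : (0 : ℝ) < y := hy
  positivity

end IsSphBesselSeq

noncomputable def sphBesselSol (s : ℝ) (n : ℕ) (x : ℝ) : ℝ :=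
  s ^ n * (exp (s * x) / x * (besselPoly n).eval (-s / x))

lemma isSphBesselSeq_sphBesselSol {s : ℝ} (hs : s ^ 2 = 1) :
    IsSphBesselSeq (sphBesselSol s) where
  hasDerivAt n x hx := by
    have hexp : HasDerivAt (fun y => exp (s * y)) (exp (s * x) * s) x := by
      simpa using ((hasDerivAt_id x).const_mul s).exp
    have harg : HasDerivAt (fun y => -s / y) (s / x ^ 2) x := by
      simpa [div_eq_mul_inv] using (hasDerivAt_inv hx).const_mul (-s)
    refine (((hexp.div (hasDerivAt_id x) hx).mul
      (((besselPoly n).hasDerivAt (-s / x)).comp x harg)).const_mul (s ^ n)).congr_deriv ?_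
    simp only [sphBesselSol, besselPoly_succ, eval_add, eval_mul, eval_pow, eval_X, eval_one,
      eval_natCast, id, Function.comp_apply, Pi.div_apply]
    field_simp
    linear_combination (s ^ n * x * (n + 1) * eval (-(s / x)) (besselPoly n) -
      s ^ (n + 1) * eval (-(s / x)) (derivative (besselPoly n))) * hs
  add_two n x hx := by
    simp only [sphBesselSol, besselPoly_add_two, eval_add, eval_mul, eval_X, eval_natCast,
      eval_ofNat]
    field_simp
    linear_combination (s ^ n * x * eval (-(s / x)) (besselPoly n) -
      s ^ (n + 1) * (2 * n + 3) * eval (-(s / x)) (besselPoly (n + 1))) * hs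

lemma kBes_eq_eval (n : ℕ) (x : ℝ) : kBes n x = exp (-x) / x * (besselPoly n).eval x⁻¹ := by
  rw [kBes, eval_besselPoly]
  congr 1
  exact sum_congr rfl fun l _ => by ring

lemma sphBesselSol_neg_one (n : ℕ) (x : ℝ) : sphBesselSol (-1) n x = (-1) ^ n * kBes n x := by
  rw [sphBesselSol, kBes_eq_eval, neg_one_mul, neg_neg, one_div]

lemma iBes_eq_sphBesselSol (n : ℕ) (x : ℝ) :
    iBes n x = (sphBesselSol 1 n x - sphBesselSol (-1) n x) / 2 := by
  have hsum : ∀ t : ℝ,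
      ∑ l ∈ range (n + 1), t ^ l * ((n + l)! : ℝ) / ((l ! : ℝ) * (n - l)! * (2 * x) ^ l) =
        (besselPoly n).eval (t / x) := fun t => by
    rw [eval_besselPoly]
    exact sum_congr rfl fun l _ => by ring
  have hk := hsum 1
  simp only [one_pow, one_mul] at hk
  rw [iBes, hk, hsum, sphBesselSol, sphBesselSol]
  simp only [one_pow, one_mul, neg_one_mul, neg_neg]
  ring

lemma isSphBesselSeq_iBes : IsSphBesselSeq iBes := by
  convert (isSphBesselSeq_sphBesselSol (s := 1) (by norm_num)).linearComb
    (isSphBesselSeq_sphBesselSol (s := -1) (by norm_num)) (1 / 2) (-1 / 2) using 1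
  ext n x
  rw [iBes_eq_sphBesselSol]
  ring

lemma kBes_add_two (n : ℕ) {x : ℝ} (hx : x ≠ 0) :
    kBes (n + 2) x = kBes n x + (2 * n + 3) / x * kBes (n + 1) x := by
  have h := (isSphBesselSeq_sphBesselSol (s := -1) (by norm_num)).add_two n hx
  simp only [sphBesselSol_neg_one, pow_succ] at h
  linear_combination (-1) ^ n * h -
    (kBes (n + 2) x - kBes n x - (2 * n + 3) / x * kBes (n + 1) x) * neg_one_pow_sq n

lemma iBes_zero (x : ℝ) : iBes 0 x = (exp x - exp (-x)) / (2 * x) := by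
  rw [iBes_eq_sphBesselSol]
  simp only [sphBesselSol, besselPoly_zero, eval_one, pow_zero, one_mul, mul_one, neg_one_mul]
  ring

lemma iBes_one {x : ℝ} (hx : x ≠ 0) :
    iBes 1 x = ((x - 1) * exp x + (x + 1) * exp (-x)) / (2 * x ^ 2) := by
  rw [iBes_eq_sphBesselSol]
  simp only [sphBesselSol, besselPoly_one, eval_add, eval_one, eval_X, pow_one, one_mul,
    neg_one_mul]
  field_simp
  ring

lemma kBes_zero (x : ℝ) : kBes 0 x = exp (-x) / x := by
  rw [kBes_eq_eval, besselPoly_zero, eval_one, mul_one]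

lemma kBes_one {x : ℝ} (hx : x ≠ 0) : kBes 1 x = (x + 1) * exp (-x) / x ^ 2 := by
  rw [kBes_eq_eval, besselPoly_one, eval_add, eval_one, eval_X]
  field_simp

lemma kBes_pos (n : ℕ) {x : ℝ} (hx : 0 < x) : 0 < kBes n x := by
  unfold kBes
  positivity

noncomputable def besselRev (n : ℕ) (x : ℝ) : ℝ :=
  ∑ l ∈ range (n + 1), besselCoeff n l * x ^ (n - l)

lemma pow_mul_eval_besselPoly_inv (n : ℕ) {x : ℝ} (hx : x ≠ 0) :
    x ^ n * (besselPoly n).eval x⁻¹ = besselRev n x := by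
  simp only [besselPoly, eval_finsetSum, eval_mul, eval_C, eval_pow, eval_X, mul_sum, besselRev]
  refine sum_congr rfl fun l hl => ?_
  rw [← pow_sub_mul_pow x (by simpa [Nat.lt_succ_iff] using hl : l ≤ n), inv_pow]
  field_simp

/-- `x ^ (n + 1) * iBes n x`, written so that it is visibly continuous and vanishes at `0`. -/
noncomputable def scaledIBes (n : ℕ) (x : ℝ) : ℝ :=
  (-1) ^ n * (exp x * besselRev n (-x) - exp (-x) * besselRev n x) / 2

lemma scaledIBes_eq (n : ℕ) {x : ℝ} (hx : x ≠ 0) : scaledIBes n x = x ^ (n + 1) * iBes n x := by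
  have hpos := pow_mul_eval_besselPoly_inv n hx
  have hneg := pow_mul_eval_besselPoly_inv n (neg_ne_zero.mpr hx)
  rw [neg_pow, inv_neg] at hneg
  rw [scaledIBes, iBes_eq_sphBesselSol, sphBesselSol, sphBesselSol, ← hpos, ← hneg]
  simp only [one_pow, one_mul, neg_one_mul, neg_neg, neg_div, one_div]
  generalize eval x⁻¹ (besselPoly n) = a, eval (-x⁻¹) (besselPoly n) = b
  field_simp
  linear_combination (x * exp x * x ^ n * b) * neg_one_pow_sq n

lemma continuous_scaledIBes (n : ℕ) : Continuous (scaledIBes n) := by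
  unfold scaledIBes besselRev
  fun_prop

lemma iBes_pos (n : ℕ) {x : ℝ} (hx : 0 < x) : 0 < iBes n x := by
  induction n generalizing x with
  | zero =>
    rw [iBes_zero]
    have := sub_pos.mpr (exp_lt_exp.mpr (show -x < x by linarith))
    positivity
  | succ n ih =>
    have hd : ∀ y ∈ interior (Set.Ici (0 : ℝ)),
        HasDerivAt (scaledIBes (n + 1)) (y ^ (n + 2) * iBes n y) y := by
      intro y hy
      rw [interior_Ici] at hy
      refine (isSphBesselSeq_iBes.hasDerivAt_pow_mul n (ne_of_gt hy)).congr_of_eventuallyEq ?_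
      filter_upwards [eventually_ne_nhds (ne_of_gt hy)] with t ht
      exact scaledIBes_eq (n + 1) ht
    have hmono : StrictMonoOn (scaledIBes (n + 1)) (Set.Ici 0) :=
      strictMonoOn_of_deriv_pos (convex_Ici 0) (continuous_scaledIBes _).continuousOn
        fun y hy => by
          rw [(hd y hy).deriv]
          rw [interior_Ici] at hy
          have := ih hy
          have : (0 : ℝ) < y := hy
          positivity
    have h := hmono Set.self_mem_Ici (Set.mem_Ici.mpr hx.le) hx
    rw [show scaledIBes (n + 1) 0 = 0 by simp [scaledIBes], scaledIBes_eq _ (ne_of_gt hx)] at h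
    exact pos_of_mul_pos_right h (by positivity)

lemma iBes_add_two_lt (n : ℕ) {x : ℝ} (hx : 0 < x) : iBes (n + 2) x < iBes n x := by
  rw [isSphBesselSeq_iBes.add_two n (ne_of_gt hx), sub_lt_self_iff]
  have := iBes_pos (n + 1) hx
  positivity

lemma iBes_one_lt_iBes_zero {x : ℝ} (hx : 0 < x) : iBes 1 x < iBes 0 x := by
  rw [iBes_one (ne_of_gt hx), iBes_zero, div_lt_div_iff₀ (by positivity) (by positivity)]
  have h := add_one_lt_exp (show 2 * x ≠ 0 by positivity)
  have hexp : exp (2 * x) = exp x * exp x := by rw [← exp_add]; ring_nf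
  have hinv : exp x * exp (-x) = 1 := by rw [← exp_add]; simp
  nlinarith [exp_pos x, exp_pos (-x)]

lemma iBes_le_iBes_zero (n : ℕ) {x : ℝ} (hx : 0 < x) : iBes n x ≤ iBes 0 x := by
  induction n using Nat.twoStepInduction with
  | zero => rfl
  | one => exact (iBes_one_lt_iBes_zero hx).le
  | more n ih _ => exact (iBes_add_two_lt n hx).le.trans ih

lemma iBes_turan (n : ℕ) {x : ℝ} (hx : 0 < x) :
    iBes n x * iBes (n + 2) x < iBes (n + 1) x ^ 2 := by
  have hmono := isSphBesselSeq_iBes.strictMonoOn_turan n fun y hy => (iBes_pos (n + 1) hy).ne'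
  have hu : Tendsto (fun y : ℝ => -(y * (exp y - exp (-y)) ^ 2 / 4)) (𝓝[>] 0) (𝓝 0) := by
    have : Continuous (fun y : ℝ => -(y * (exp y - exp (-y)) ^ 2 / 4)) := by fun_prop
    simpa using (this.tendsto 0).mono_left nhdsWithin_le_nhds
  have hpos := hmono.pos_of_le_of_tendsto_nhdsGT hu (fun y hy => ?_) hx
  · have : 0 < x ^ 3 := by positivity
    nlinarith
  · have h0 := iBes_le_iBes_zero n hy
    have h2 := iBes_le_iBes_zero (n + 2) hy
    have hprod : iBes n y * iBes (n + 2) y ≤ iBes 0 y ^ 2 := by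
      nlinarith [iBes_pos n hy, iBes_pos (n + 2) hy]
    have hy3 : 0 < y ^ 3 := by positivity
    have huy : -(y * (exp y - exp (-y)) ^ 2 / 4) = -(y ^ 3 * iBes 0 y ^ 2) := by
      rw [iBes_zero]
      field_simp
      ring
    rw [huy]
    nlinarith [sq_nonneg (iBes (n + 1) y)]

lemma tendsto_pow_three_mul_kBes_sq (n : ℕ) :
    Tendsto (fun y => y ^ 3 * kBes n y ^ 2) atTop (𝓝 0) := by
  have hexp : Tendsto (fun y => y * exp (-y) * exp (-y)) atTop (𝓝 0) := by
    simpa using (tendsto_pow_mul_exp_neg_atTop_nhds_zero 1).mul tendsto_exp_neg_atTop_nhds_zero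
  have hpoly : Tendsto (fun y : ℝ => (besselPoly n).eval y⁻¹ ^ 2) atTop
      (𝓝 ((besselPoly n).eval 0 ^ 2)) :=
    (((besselPoly n).continuous.tendsto 0).comp tendsto_inv_atTop_zero).pow 2
  refine (zero_mul ((besselPoly n).eval 0 ^ 2) ▸ hexp.mul hpoly).congr' ?_
  filter_upwards [eventually_gt_atTop 0] with y hy
  rw [kBes_eq_eval]
  field_simp

lemma kBes_turan (n : ℕ) {x : ℝ} (hx : 0 < x) :
    kBes (n + 1) x ^ 2 < kBes n x * kBes (n + 2) x := by
  have hturan : ∀ y, y ^ 3 * (sphBesselSol (-1) (n + 1) y ^ 2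
      - sphBesselSol (-1) n y * sphBesselSol (-1) (n + 2) y) =
      y ^ 3 * (kBes (n + 1) y ^ 2 - kBes n y * kBes (n + 2) y) := fun y => by
    simp only [sphBesselSol_neg_one, pow_succ]
    linear_combination y ^ 3 * (kBes (n + 1) y ^ 2 - kBes n y * kBes (n + 2) y) *
      neg_one_pow_sq n
  have hmono := (isSphBesselSeq_sphBesselSol (s := -1) (by norm_num)).strictMonoOn_turan n
    fun y hy => by
      rw [sphBesselSol_neg_one]
      exact mul_ne_zero (pow_ne_zero _ (by norm_num)) (kBes_pos (n + 1) hy).ne'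
  simp only [hturan] at hmono
  have := hmono.neg_of_le_of_tendsto_atTop (tendsto_pow_three_mul_kBes_sq (n + 1))
    (fun y hy => by
      have := mul_pos (pow_pos hy 3) (mul_pos (kBes_pos n hy) (kBes_pos (n + 2) hy))
      nlinarith) hx
  nlinarith [pow_pos hx 3]

lemma two_mul_iBes_mul_kBes_lt (n : ℕ) {x : ℝ} (hx : 0 < x) :
    2 * n * (iBes n x * kBes n x) <
      x * (iBes n x * kBes (n + 1) x - iBes (n + 1) x * kBes n x) := by
  cases n with
  | zero =>
    have hlt : (x + 1) * exp (-x) < exp x := by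
      have h1 := add_one_lt_exp (ne_of_gt hx)
      have h2 : exp x * exp (-x) = 1 := by rw [← exp_add]; simp
      nlinarith [one_lt_exp_iff.mpr hx, exp_pos (-x)]
    rw [iBes_zero, iBes_one (ne_of_gt hx), kBes_zero, kBes_one (ne_of_gt hx),
      show x * ((exp x - exp (-x)) / (2 * x) * ((x + 1) * exp (-x) / x ^ 2) -
        ((x - 1) * exp x + (x + 1) * exp (-x)) / (2 * x ^ 2) * (exp (-x) / x)) =
        exp (-x) / x ^ 2 * (exp x - (x + 1) * exp (-x)) by field_simp; ring]
    have := sub_pos.mpr hlt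
    simp only [CharP.cast_eq_zero, mul_zero, zero_mul]
    positivity
  | succ m =>
    have hi₁ := iBes_pos (m + 1) hx
    have hk₁ := kBes_pos (m + 1) hx
    have hi₂ := iBes_pos (m + 2) hx
    have hk₂ := kBes_pos (m + 2) hx
    have hi : x * iBes (m + 2) x ^ 2 + (2 * m + 3) * (iBes (m + 1) x * iBes (m + 2) x) <
        x * iBes (m + 1) x ^ 2 := by
      have h := mul_lt_mul_of_pos_left (iBes_turan m hx) hx
      rw [show iBes m x = iBes (m + 2) x + (2 * m + 3) / x * iBes (m + 1) x by
        rw [isSphBesselSeq_iBes.add_two m (ne_of_gt hx)]; ring] at h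
      field_simp at h
      linarith
    have hk : x * kBes (m + 1) x ^ 2 + (2 * m + 3) * (kBes (m + 1) x * kBes (m + 2) x) <
        x * kBes (m + 2) x ^ 2 := by
      have h := mul_lt_mul_of_pos_left (kBes_turan m hx) hx
      rw [show kBes m x = kBes (m + 2) x - (2 * m + 3) / x * kBes (m + 1) x by
        rw [kBes_add_two m (ne_of_gt hx)]; ring] at h
      field_simp at h
      linarith
    set i₁ := iBes (m + 1) x
    set i₂ := iBes (m + 2) x
    set k₁ := kBes (m + 1) x
    set k₂ := kBes (m + 2) x
    set c : ℝ := 2 * m + 3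
    have hprod : 0 < (x * (i₁ * k₂) + x * (i₂ * k₁)) *
        (x * (i₁ * k₂) - x * (i₂ * k₁) - c * (i₁ * k₁)) := by
      rw [show (x * (i₁ * k₂) + x * (i₂ * k₁)) * (x * (i₁ * k₂) - x * (i₂ * k₁) - c * (i₁ * k₁)) =
          x * i₁ ^ 2 * (x * k₂ ^ 2 - x * k₁ ^ 2 - c * (k₁ * k₂)) +
            x * k₁ ^ 2 * (x * i₁ ^ 2 - x * i₂ ^ 2 - c * (i₁ * i₂)) by ring]
      exact add_pos (mul_pos (by positivity) (by linarith)) (mul_pos (by positivity) (by linarith))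
    have := (pos_iff_pos_of_mul_pos hprod).mp (by positivity)
    push_cast
    nlinarith [mul_pos hi₁ hk₁]

lemma quadratic_at_neg_one_pos {n x e s i₀ i₁ k₀ k₁ : ℝ} (hn : 0 ≤ n) (hx : 0 < x)
    (hi₀ : 0 < i₀) (hi₁ : 0 < i₁) (hk₀ : 0 < k₀) (hk₁ : 0 < k₁) (he : 0 < e) (hes : e ≤ s)
    (hW : 2 * n * (i₀ * k₀) < x * (i₀ * k₁ - i₁ * k₀)) :
    let A := n * (e - s) * i₀ - x * s * i₁
    let B := n * (e - s) * k₀ + x * s * k₁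
    let C := n * i₀ + x * i₁
    let D := n * k₀ - x * k₁
    let F := 2 * n / x + i₁ / i₀ - k₁ / k₀
    0 < A ^ 2 * D * k₀ * (-1) ^ 2 - A * B * x * i₀ * k₀ * F * (-1) + B ^ 2 * C * i₀ := by
  intro A B C D F
  have hF : x * i₀ * k₀ * F = 2 * n * (i₀ * k₀) + x * (i₁ * k₀ - i₀ * k₁) := by
    simp only [F]
    field_simp
    ring
  have hfactor : A ^ 2 * D * k₀ * (-1) ^ 2 - A * B * x * i₀ * k₀ * F * (-1) + B ^ 2 * C * i₀ =
      (A * k₀ + B * i₀) * (A * D + B * C) := by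
    simp only [C, D]
    linear_combination (A * B) * hF
  set W := x * (i₀ * k₁ - i₁ * k₀) - 2 * n * (i₀ * k₀)
  have hW₀ : 0 < W := sub_pos.mpr hW
  have h₁ : A * k₀ + B * i₀ = s * W + 2 * n * e * (i₀ * k₀) := by
    simp only [A, B, W]
    ring
  have h₂ : A * D + B * C =
      n * (2 * s - e) * W + 2 * n ^ 2 * s * (i₀ * k₀) + 2 * x ^ 2 * s * (i₁ * k₁) := by
    simp only [A, B, C, D, W]
    ring
  have hs : 0 < s := he.trans_le hes
  have h2se : 0 ≤ 2 * s - e := by linarith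
  rw [hfactor, h₁, h₂]
  positivity

/-- For every integer `n ≥ 0`, every real `x > 0`, and all reals `ε, ε_s` with
`0 < ε ≤ ε_s`, the quadratic `f_n` satisfies `f_n(−1) > 0`. -/
theorem fquad_at_neg_one_pos (n : ℕ) (x : ℝ) (hx : 0 < x) (eps epss : ℝ)
    (heps : 0 < eps) (hle : eps ≤ epss) :
    0 < fquad n x eps epss (-1) :=
  quadratic_at_neg_one_pos (Nat.cast_nonneg n) hx (iBes_pos n hx) (iBes_pos (n + 1) hx)
    (kBes_pos n hx) (kBes_pos (n + 1) hx) heps hle (two_mul_iBes_mul_kBes_lt n hx)
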